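/- Let K be a commutative ring, v, w : ℕ → K, and A^{v,w}(n,k) defined by the recurrence A^{v,w}(n,k) = A^{v,w}(n-1,k-1) + (v_{n-1}+w_k)·A^{v,w}(n-1,k) with standard initial conditions. Then for k ≤ n: A^{v,w}(n,k) = ∑_{j=k}^{n} A^{v,w}(j−1, k−1) · ∏_{i=j}^{n-1} (v_i + w_k). -/

import Mathlib

open Finset

/-- The generalized two-weight array `A^{v,w}(n,k)`. -/
def A {K : Type*} [CommRing K] (v w : ℕ → K) : ℕ → ℕ → K
  | 0, 0 => 1
  | 0, _ + 1 => 0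
  | n + 1, 0 => (v n + w 0) * A v w n 0
  | n + 1, k + 1 => A v w n k + (v n + w (k + 1)) * A v w n (k + 1)

/-!
For fixed `k ≥ 1`, the column `n ↦ A(n,k)` solves the first-order linear recurrence
`x (n+1) = (v n + w k) * x n + A(n, k-1)` with `x 0 = 0`; unrolling it gives the sum, in which the
terms with `j < k` vanish because `A(n,k) = 0` below the diagonal.
-/

theorem eq_mul_prod_add_sum_of_succ {R : Type*} [CommSemiring R] (x f c : ℕ → R)
    (h : ∀ n, x (n + 1) = c n * x n + f (n + 1)) (n : ℕ) :
    x n = x 0 * ∏ i ∈ range n, c i + ∑ j ∈ Icc 1 n, f j * ∏ i ∈ Ico j n, c i := by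
  induction n with
  | zero => simp
  | succ n ih =>
    have sum_succ : ∑ j ∈ Icc 1 n, f j * ∏ i ∈ Ico j (n + 1), c i =
        (∑ j ∈ Icc 1 n, f j * ∏ i ∈ Ico j n, c i) * c n := by
      rw [sum_mul]
      refine sum_congr rfl fun j hj => ?_
      rw [prod_Ico_succ_top (mem_Icc.mp hj).2, mul_assoc]
    rw [h, ih, sum_Icc_succ_top (by omega), sum_succ, prod_range_succ, Ico_self, prod_empty]
    ring

theorem A_eq_zero_of_lt {K : Type*} [CommRing K] (v w : ℕ → K) {n k : ℕ} (h : n < k) :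
    A v w n k = 0 := by
  induction n generalizing k with
  | zero => obtain ⟨k, rfl⟩ := Nat.exists_eq_add_one_of_ne_zero h.ne'; rfl
  | succ n ih =>
    obtain ⟨k, rfl⟩ := Nat.exists_eq_add_one_of_ne_zero (n.succ_pos.trans h).ne'
    simp only [A, ih (by omega : n < k), ih (by omega : n < k + 1), mul_zero, add_zero]

theorem stmt_6_general {K : Type*} [CommRing K] (v w : ℕ → K) (n k : ℕ) (hk1 : 1 ≤ k) :
    A v w n k =
      ∑ j ∈ Finset.Icc k n, A v w (j - 1) (k - 1) * ∏ i ∈ Finset.Ico j n, (v i + w k) := by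
  obtain ⟨m, rfl⟩ := Nat.exists_eq_add_of_le' hk1
  have hcol := eq_mul_prod_add_sum_of_succ (A v w · (m + 1)) (fun j => A v w (j - 1) m)
    (fun i => v i + w (m + 1)) (fun n => by simp only [A, Nat.add_sub_cancel]; ring) n
  rw [hcol, show A v w 0 (m + 1) = 0 from rfl, zero_mul, zero_add, Nat.add_sub_cancel]
  refine (sum_subset (Icc_subset_Icc_left (by omega)) fun j hj hjk => ?_).symm
  rw [A_eq_zero_of_lt v w (by simp only [mem_Icc] at hj hjk; omega), zero_mul]

theorem stmt_6 {K : Type*} [CommRing K] (v w : ℕ → K) (n k : ℕ) (hk1 : 1 ≤ k) (hkn : k ≤ n) :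
    A v w n k =
      ∑ j ∈ Finset.Icc k n, A v w (j - 1) (k - 1) * ∏ i ∈ Finset.Ico j n, (v i + w k) :=
  stmt_6_general v w n k hk1
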